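/- arXiv:1111.0224 — 7 statements merged into one kernel-verified Lean document; each statement's English description precedes it below -/
import Mathlib

section
/- If G is a group whose center has finite index in G, then the derived subgroup [G,G] is finite. -/
/-!
A commutator `⁅g, h⁆` only depends on the cosets of `g` and `h` modulo the center, so when the
center has finite index there are only finitely many commutators. A group with finitely many
commutators has a finite derived subgroup, by Schreier's bound on the rank of a finite-index
subgroup (`Subgroup.card_commutator_le_of_finite_commutatorSet`).
-/

open Subgroup
open scoped commutatorElement

section

variable {G : Type*} [Group G]

theorem commutatorElement_mul_mem_center_left (a b : G) {z : G} (hz : z ∈ center G) :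
    ⁅a * z, b⁆ = ⁅a, b⁆ := by
  have : ⁅z, b⁆ = 1 := Commute.commutator_eq (mem_center_iff.mp hz b).symm
  rw [commutatorElement_mul_left_eq_conj_mul, this, mul_one, mul_inv_cancel, one_mul]

theorem commutatorElement_mul_mem_center_right (a b : G) {w : G} (hw : w ∈ center G) :
    ⁅a, b * w⁆ = ⁅a, b⁆ := by
  have : ⁅a, w⁆ = 1 := Commute.commutator_eq (mem_center_iff.mp hw a)
  rw [commutatorElement_mul_right_eq_mul_conj, this, mul_one, mul_inv_cancel_right]

theorem commutatorSet_subset_range_out_center :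
    commutatorSet G ⊆
      Set.range fun p : (G ⧸ center G) × (G ⧸ center G) => ⁅p.1.out, p.2.out⁆ := by
  rintro _ ⟨g, h, rfl⟩
  obtain ⟨z, hz⟩ := QuotientGroup.mk_out_eq_mul (center G) g
  obtain ⟨w, hw⟩ := QuotientGroup.mk_out_eq_mul (center G) h
  refine ⟨((g : G ⧸ center G), (h : G ⧸ center G)), ?_⟩
  simp only [hz, hw, commutatorElement_mul_mem_center_left _ _ z.2,
    commutatorElement_mul_mem_center_right _ _ w.2]

theorem finite_commutatorSet_of_finiteIndex_center [(center G).FiniteIndex] :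
    Finite (commutatorSet G) :=
  have := (center G).finite_quotient_of_finiteIndex
  Finite.Set.subset _ commutatorSet_subset_range_out_center

end

/-- **Schur's theorem.** If the center of `G` has finite index, then the
derived subgroup `[G,G]` is finite. -/
theorem schur_finite_commutator (G : Type*) [Group G]
    [(Subgroup.center G).FiniteIndex] :
    Finite (_root_.commutator G) := by
  have := finite_commutatorSet_of_finiteIndex_center (G := G)
  infer_instance
end

section
/- If G is a group such that G/ζ_n(G) is finite for some positive integer n, then the nilpotent residual of G (the intersection of all normal subgroups N with G/N nilpotent) is finite. -/
/-!
Baer's theorem: if `G/ζ_n(G)` is finite, then so is `γ_{n+1}(G)` (Mathlib's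
`lowerCentralSeries ⊤ n`); as `G/γ_{n+1}(G)` is nilpotent, the nilpotent residual lies in it.

Baer's theorem goes by induction on `n`. In the step `G/ζ_{n+1}(G)` is finite; for
`M = γ_{n+1}(G)` the induction hypothesis, applied to `G/Z(G)`, says that `M` is finite modulo
`Z(G)`, and `ζ_{n+1}(G)`, of finite index, centralizes `M` by the three subgroups lemma. Hence
`⁅m, g⁆` (`m ∈ M`, `g ∈ G`) takes only finitely many values. By Schur's theorem
`D = ⁅M Z(G), M Z(G)⁆` is finite, and modulo `D` the group `M` is abelian, so
`⁅m, g⁆ ^ k = ⁅m ^ k, g⁆ = 1` as soon as `m ^ k` is central. Thus `⁅M, G⁆` is finite modulo `D`,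
being generated by finitely many commuting elements of finite order.
-/

/-- The nilpotent residual of `G`: the intersection of all normal subgroups
`N` such that `G/N` is nilpotent. -/
def nilpotentResidual (G : Type*) [Group G] : Subgroup G :=
  sInf {N : Subgroup G | ∃ _ : N.Normal, Group.IsNilpotent (G ⧸ N)}

open scoped commutatorElement

section Commutators

variable {G : Type*} [Group G]

theorem commutatorElement_mul_left_of_commute {a b c : G} (h : Commute c b) :
    ⁅a * c, b⁆ = ⁅a, b⁆ := by
  rw [commutatorElement_mul_left_eq_conj_mul, commutatorElement_eq_one_iff_commute.mpr h,
    mul_one, mul_inv_cancel, one_mul]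

theorem commutatorElement_mul_right_of_commute {a b c : G} (h : Commute a c) :
    ⁅a, b * c⁆ = ⁅a, b⁆ := by
  rw [commutatorElement_mul_right_eq_mul_conj, commutatorElement_eq_one_iff_commute.mpr h,
    mul_one, mul_inv_cancel_right]

theorem commutatorElement_pow_left_of_commute {a b : G} (h : Commute a ⁅a, b⁆) (k : ℕ) :
    ⁅a ^ k, b⁆ = ⁅a, b⁆ ^ k := by
  induction k with
  | zero => simp
  | succ k ih =>
    rw [pow_succ', commutatorElement_mul_left_eq_conj_mul, ih, (h.pow_right k).eq,
      mul_inv_cancel_right, pow_succ]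

end Commutators

namespace Subgroup

variable {G : Type*} [Group G]

theorem finite_commutators_of_relIndex_centralizer_ne_zero {A B : Subgroup G}
    (hA : (centralizer (B : Set G)).relIndex A ≠ 0)
    (hB : (centralizer (A : Set G)).relIndex B ≠ 0) :
    {g | ∃ a ∈ A, ∃ b ∈ B, ⁅a, b⁆ = g}.Finite := by
  let X := (centralizer (B : Set G)).subgroupOf A
  let Y := (centralizer (A : Set G)).subgroupOf B
  have : X.FiniteIndex := ⟨hA⟩
  have : Y.FiniteIndex := ⟨hB⟩
  -- `⁅a, b⁆` only depends on the cosets `a X` and `b Y`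
  refine (Set.finite_range fun p : (A ⧸ X) × (B ⧸ Y) ↦ ⁅(p.1.out : G), (p.2.out : G)⁆).subset ?_
  rintro _ ⟨a, ha, b, hb, rfl⟩
  obtain ⟨x, hx⟩ := QuotientGroup.mk_out_eq_mul X ⟨a, ha⟩
  obtain ⟨y, hy⟩ := QuotientGroup.mk_out_eq_mul Y ⟨b, hb⟩
  have hxb : Commute (x : G) b := (mem_centralizer_iff.mp x.2 b hb).symm
  have hay : Commute (a * x : G) y := mem_centralizer_iff.mp y.2 _ (A.mul_mem ha (x : A).2)
  refine ⟨((⟨a, ha⟩ : A), (⟨b, hb⟩ : B)), ?_⟩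
  dsimp only
  rw [hx, hy, coe_mul, coe_mul, commutatorElement_mul_right_of_commute hay,
    commutatorElement_mul_left_of_commute hxb]

theorem finite_commutator_of_relIndex_center_ne_zero {H : Subgroup G}
    (h : (center G).relIndex H ≠ 0) : Finite (⁅H, H⁆ : Subgroup G) := by
  have : ((center G).subgroupOf H).FiniteIndex := ⟨h⟩
  have : (center H).FiniteIndex :=
    finiteIndex_of_le fun z hz ↦
      mem_center_iff.mpr fun g ↦ Subtype.ext (mem_center_iff.mp (mem_subgroupOf.mp hz) g)
  have hZ : (centralizer ((⊤ : Subgroup H) : Set H)).relIndex ⊤ ≠ 0 := by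
    rw [coe_top, centralizer_univ, relIndex_top_right]
    exact FiniteIndex.index_ne_zero
  have hfin : (commutatorSet H).Finite := by
    refine (finite_commutators_of_relIndex_centralizer_ne_zero hZ hZ).subset ?_
    rintro _ ⟨a, b, rfl⟩
    exact ⟨a, mem_top a, b, mem_top b, rfl⟩
  have : Finite (commutatorSet H) := hfin
  rw [← map_subtype_commutator]
  exact Finite.of_surjective _ (H.subtype.subgroupMap_surjective _)

open scoped IsMulCommutative in
theorem finite_closure_of_commute_of_isOfFinOrder {s : Set G} (hs : s.Finite)
    (hcomm : ∀ x ∈ s, ∀ y ∈ s, Commute x y) (hfin : ∀ x ∈ s, IsOfFinOrder x) :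
    Finite (closure s) := by
  have := isMulCommutative_closure hcomm
  have : Finite s := hs
  refine CommGroup.finite_of_fg_isMulTorsion (closure s) fun x ↦ Submonoid.isOfFinOrder_coe.mp ?_
  obtain ⟨x, hx⟩ := x
  induction hx using closure_induction with
  | mem x hx => exact hfin x hx
  | one => exact IsOfFinOrder.one
  | mul x y hx hy hxo hyo =>
    have hxy : Commute x y := congrArg Subtype.val (mul_comm (⟨x, hx⟩ : closure s) ⟨y, hy⟩)
    exact hxy.isOfFinOrder_mul hxo hyo
  | inv x _ hxo => exact hxo.inv

theorem finite_of_finite_map_of_finite_ker {G' : Type*} [Group G'] (f : G →* G') (K : Subgroup G)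
    [Finite f.ker] [Finite (K.map f)] : Finite K := by
  rw [finite_iff_finite_and_finiteIndex (f.ker.subgroupOf K), finiteIndex_iff, ← relIndex,
    relIndex_ker]
  refine ⟨Finite.of_injective (fun x ↦ (⟨x.1, x.2⟩ : f.ker)) fun x y h ↦ ?_, Nat.card_pos.ne'⟩
  ext
  simpa using congrArg Subtype.val h

theorem finite_commutator_top_of_relIndex_center_ne_zero {M : Subgroup G} [M.Normal]
    [(centralizer (M : Set G)).FiniteIndex] (hZ : (center G).relIndex M ≠ 0) :
    Finite (⁅M, ⊤⁆ : Subgroup G) := by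
  let D := ⁅M ⊔ center G, M ⊔ center G⁆
  have : Finite D := finite_commutator_of_relIndex_center_ne_zero (by rwa [relIndex_sup_right])
  let π := QuotientGroup.mk' D
  let T := {g | ∃ m ∈ M, ∃ x ∈ (⊤ : Subgroup G), ⁅m, x⁆ = g}
  have hT : T.Finite := finite_commutators_of_relIndex_centralizer_ne_zero
    (by rwa [coe_top, centralizer_univ])
    (by rw [relIndex_top_right]; exact FiniteIndex.index_ne_zero)
  have hTM : T ⊆ M := fun g hg ↦ commutator_le_left M ⊤ (subset_closure hg)
  have hcomm : ∀ x ∈ M, ∀ y ∈ M, Commute (π x) (π y) := fun x hx y hy ↦ by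
    rw [← commutatorElement_eq_one_iff_commute, ← map_commutatorElement,
      QuotientGroup.mk'_apply, QuotientGroup.eq_one_iff]
    exact commutator_mem_commutator (mem_sup_left hx) (mem_sup_left hy)
  have htors : ∀ t ∈ T, IsOfFinOrder (π t) := by
    rintro _ ⟨m, hm, g, -, rfl⟩
    obtain ⟨k, hk, -, hmk⟩ := exists_pow_mem_of_relIndex_ne_zero hZ hm
    have h := hcomm m hm _ (hTM ⟨m, hm, g, mem_top g, rfl⟩)
    rw [map_commutatorElement] at h ⊢
    refine isOfFinOrder_iff_pow_eq_one.mpr ⟨k, hk, ?_⟩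
    rw [← commutatorElement_pow_left_of_commute h, ← map_pow, ← map_commutatorElement,
      commutatorElement_eq_one_iff_commute.mpr (mem_center_iff.mp hmk.1 g).symm, map_one]
  have : Finite ((⁅M, ⊤⁆ : Subgroup G).map π) := by
    rw [commutator_def, MonoidHom.map_closure]
    refine finite_closure_of_commute_of_isOfFinOrder (hT.image π) ?_ ?_
    · rintro _ ⟨x, hx, rfl⟩ _ ⟨y, hy, rfl⟩
      exact hcomm x (hTM hx) y (hTM hy)
    · rintro _ ⟨t, ht, rfl⟩
      exact htors t ht
  have : Finite π.ker := by rw [QuotientGroup.ker_mk']; infer_instance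
  exact finite_of_finite_map_of_finite_ker π _

theorem map_lowerCentralSeries_top_of_surjective {G' : Type*} [Group G'] {f : G →* G'}
    (hf : Function.Surjective f) (n : ℕ) :
    (lowerCentralSeries (⊤ : Subgroup G) n).map f = lowerCentralSeries ⊤ n := by
  rw [map_lowerCentralSeries, map_top_of_surjective f hf]

theorem map_mk_center_upperCentralSeries_succ (n : ℕ) :
    (upperCentralSeries G (n + 1)).map (QuotientGroup.mk' (center G)) =
      upperCentralSeries (G ⧸ center G) n := by
  rw [← comap_upperCentralSeries_quotient_center,
    map_comap_eq_self_of_surjective (QuotientGroup.mk'_surjective _)]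

theorem commutator_lowerCentralSeries_upperCentralSeries_eq_bot (n : ℕ) :
    ⁅lowerCentralSeries (⊤ : Subgroup G) n, upperCentralSeries G (n + 1)⁆ = ⊥ := by
  induction n generalizing G with
  | zero => rw [lowerCentralSeries_zero, upperCentralSeries_one, commutator_center_right]
  | succ n ih =>
    rw [lowerCentralSeries_succ]
    refine commutator_commutator_eq_bot_of_rotate ?_ ?_
    · rw [eq_bot_iff, ← ih, commutator_comm (lowerCentralSeries ⊤ n)]
      exact commutator_mono (commutator_comm_le _ _ |>.trans
        (commutator_upperCentralSeries_top_le G _)) le_rfl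
    · rw [commutator_top_right_eq_bot_iff_le_center, ← QuotientGroup.ker_mk' (center G),
        ← map_eq_bot_iff, map_commutator, map_mk_center_upperCentralSeries_succ,
        map_lowerCentralSeries_top_of_surjective (QuotientGroup.mk'_surjective _), commutator_comm,
        ih]

theorem finite_lowerCentralSeries_of_finiteIndex_upperCentralSeries (n : ℕ)
    [(upperCentralSeries G n).FiniteIndex] : Finite (lowerCentralSeries (⊤ : Subgroup G) n) := by
  induction n generalizing G with
  | zero =>
    have : Finite G := Nat.finite_of_card_ne_zero <| by
      rw [← index_bot, ← upperCentralSeries_zero]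
      exact FiniteIndex.index_ne_zero
    infer_instance
  | succ n ih =>
    have : (upperCentralSeries (G ⧸ center G) n).FiniteIndex := by
      rw [finiteIndex_iff, ← index_comap_of_surjective _ (QuotientGroup.mk'_surjective _),
        comap_upperCentralSeries_quotient_center]
      exact FiniteIndex.index_ne_zero
    have : (centralizer (lowerCentralSeries (⊤ : Subgroup G) n : Set G)).FiniteIndex :=
      finiteIndex_of_le <| commutator_eq_bot_iff_le_centralizer.mp <| by
        rw [commutator_comm, commutator_lowerCentralSeries_upperCentralSeries_eq_bot]
    refine finite_commutator_top_of_relIndex_center_ne_zero ?_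
    rw [← QuotientGroup.ker_mk' (center G), relIndex_ker,
      map_lowerCentralSeries_top_of_surjective (QuotientGroup.mk'_surjective _)]
    exact Nat.card_pos.ne'

end Subgroup

theorem nilpotentResidual_finite_of_finite_upperCentral_quotient_general
    (G : Type*) [Group G] (n : ℕ)
    (hfin : Finite (G ⧸ upperCentralSeries G n)) :
    Finite (nilpotentResidual G) := by
  have : (Subgroup.upperCentralSeries G n).FiniteIndex :=
    Subgroup.finiteIndex_iff_finite_quotient.mpr hfin
  have hnil : Group.IsNilpotent (G ⧸ (⊤ : Subgroup G).lowerCentralSeries n) := by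
    refine Subgroup.nilpotent_iff_lowerCentralSeries.mpr ⟨n, ?_⟩
    rw [← Subgroup.map_lowerCentralSeries_top_of_surjective (QuotientGroup.mk'_surjective _),
      Subgroup.map_eq_bot_iff, QuotientGroup.ker_mk']
  have hle : nilpotentResidual G ≤ (⊤ : Subgroup G).lowerCentralSeries n :=
    sInf_le ⟨inferInstance, hnil⟩
  have : Finite ((⊤ : Subgroup G).lowerCentralSeries n) :=
    Subgroup.finite_lowerCentralSeries_of_finiteIndex_upperCentralSeries n
  exact Finite.of_injective _ (Subgroup.inclusion_injective hle)

/-- If `G/ζ_n(G)` is finite for some positive integer `n`, then the nilpotent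
residual of `G` is finite. -/
theorem nilpotentResidual_finite_of_finite_upperCentral_quotient
    (G : Type*) [Group G] (n : ℕ) (hn : 0 < n)
    (hfin : Finite (G ⧸ upperCentralSeries G n)) :
    Finite (nilpotentResidual G) :=
  nilpotentResidual_finite_of_finite_upperCentral_quotient_general G n hfin
end

section
/- Let G be a group, K ≤ G a subgroup, and n a positive integer such that G = K·ζ_n(G). Then γ_{n+1}(G) = γ_{n+1}(K). -/
/-!
Write `γ_{i+1}` for `(⊤ : Subgroup G).lowerCentralSeries i` and `ζⱼ` for `upperCentralSeries G j`.
The three subgroups lemma gives `⁅γ_{i+1}(G), ζ_{j+i+1}⁆ ≤ ζⱼ`. Expanding `⁅m z, k w⁆` with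
`m ∈ γ_{i+1}(K)`, `z ∈ ζ_{j+1}`, `k ∈ K`, `w ∈ ζ_{j+i+1}` then shows, by induction on `i`, that
`G = K ζ_{i+j}` forces `γ_{i+1}(G) ≤ γ_{i+1}(K) ζⱼ`; take `i = n`, `j = 0`.
-/

open scoped commutatorElement

namespace Subgroup

variable {G : Type*} [Group G]

theorem commutator_commutator_le_of_rotate {A B C H : Subgroup G} [H.Normal]
    (h₁ : ⁅⁅B, C⁆, A⁆ ≤ H) (h₂ : ⁅⁅C, A⁆, B⁆ ≤ H) : ⁅⁅A, B⁆, C⁆ ≤ H := by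
  have in_ker_iff {X Y Z : Subgroup G} :
      ⁅⁅X, Y⁆, Z⁆ ≤ H ↔ ⁅⁅X.map (QuotientGroup.mk' H), Y.map (QuotientGroup.mk' H)⁆,
        Z.map (QuotientGroup.mk' H)⁆ = ⊥ := by
    rw [← map_commutator, ← map_commutator, map_eq_bot_iff, QuotientGroup.ker_mk']
  exact in_ker_iff.mpr (commutator_commutator_eq_bot_of_rotate (in_ker_iff.mp h₁) (in_ker_iff.mp h₂))

theorem commutator_top_upperCentralSeries_le (j : ℕ) :
    ⁅(⊤ : Subgroup G), upperCentralSeries G (j + 1)⁆ ≤ upperCentralSeries G j := by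
  rw [commutator_comm]
  exact commutator_upperCentralSeries_top_le G j

theorem commutator_lowerCentralSeries_upperCentralSeries_le (i j : ℕ) :
    ⁅(⊤ : Subgroup G).lowerCentralSeries i, upperCentralSeries G (j + i + 1)⁆ ≤
      upperCentralSeries G j := by
  induction i generalizing j with
  | zero => exact commutator_top_upperCentralSeries_le j
  | succ i ih =>
    rw [lowerCentralSeries_succ]
    refine commutator_commutator_le_of_rotate ?_ ?_
    · calc ⁅⁅⊤, upperCentralSeries G (j + (i + 1) + 1)⁆, (⊤ : Subgroup G).lowerCentralSeries i⁆
          ≤ ⁅upperCentralSeries G (j + i + 1), (⊤ : Subgroup G).lowerCentralSeries i⁆ :=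
            commutator_mono (commutator_top_upperCentralSeries_le _) le_rfl
        _ ≤ upperCentralSeries G j := by rw [commutator_comm]; exact ih j
    · calc ⁅⁅upperCentralSeries G (j + (i + 1) + 1), (⊤ : Subgroup G).lowerCentralSeries i⁆, ⊤⁆
          ≤ ⁅upperCentralSeries G (j + 1), ⊤⁆ := by
            refine commutator_mono ?_ le_rfl
            rw [commutator_comm, show j + (i + 1) + 1 = j + 1 + i + 1 by omega]
            exact ih (j + 1)
        _ ≤ upperCentralSeries G j := commutator_upperCentralSeries_top_le G j

theorem commutator_sup_upperCentralSeries_le (K : Subgroup G) (i j : ℕ) :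
    ⁅K.lowerCentralSeries i ⊔ upperCentralSeries G (j + 1), K ⊔ upperCentralSeries G (j + i + 1)⁆ ≤
      K.lowerCentralSeries (i + 1) ⊔ upperCentralSeries G j := by
  rw [commutator_le]
  rintro _ hx _ hg
  obtain ⟨m, hm, z, hz, rfl⟩ := mem_sup_of_normal_right.mp hx
  obtain ⟨k, hk, w, hw, rfl⟩ := mem_sup_of_normal_right.mp hg
  have hzg : ⁅z, k * w⁆ ∈ upperCentralSeries G j := mem_upperCentralSeries_succ_iff.mp hz _
  have hmk : ⁅m, k⁆ ∈ K.lowerCentralSeries (i + 1) := commutator_mem_commutator hm hk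
  have hmw : ⁅m, w⁆ ∈ upperCentralSeries G j :=
    commutator_lowerCentralSeries_upperCentralSeries_le i j
      (commutator_mem_commutator (lowerCentralSeries_mono i le_top hm) hw)
  have expand : ⁅m * z, k * w⁆ = (m * ⁅z, k * w⁆ * m⁻¹) * (⁅m, k⁆ * (k * ⁅m, w⁆ * k⁻¹)) := by
    simp only [commutatorElement_def]
    group
  rw [expand]
  exact mul_mem (mem_sup_right (Normal.conj_mem inferInstance _ hzg m))
    (mul_mem (mem_sup_left hmk) (mem_sup_right (Normal.conj_mem inferInstance _ hmw k)))

theorem lowerCentralSeries_le_sup_upperCentralSeries {K : Subgroup G} {i j : ℕ}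
    (hK : K ⊔ upperCentralSeries G (i + j) = ⊤) :
    (⊤ : Subgroup G).lowerCentralSeries i ≤ K.lowerCentralSeries i ⊔ upperCentralSeries G j := by
  induction i generalizing j with
  | zero => simpa using hK.ge
  | succ i ih =>
    rw [show i + 1 + j = i + (j + 1) by omega] at hK
    calc (⊤ : Subgroup G).lowerCentralSeries (i + 1)
        ≤ ⁅K.lowerCentralSeries i ⊔ upperCentralSeries G (j + 1),
            K ⊔ upperCentralSeries G (j + i + 1)⁆ := by
          rw [lowerCentralSeries_succ]
          refine commutator_mono (ih hK) ?_
          rw [← hK, show j + i + 1 = i + (j + 1) by omega]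
      _ ≤ K.lowerCentralSeries (i + 1) ⊔ upperCentralSeries G j :=
          commutator_sup_upperCentralSeries_le K i j

end Subgroup

theorem hekster_lowerCentral_general (G : Type*) [Group G] (K : Subgroup G) (n : ℕ)
    (hKZ : ∀ g : G, ∃ k ∈ K, ∃ z ∈ upperCentralSeries G n, g = k * z) :
    (⊤ : Subgroup G).lowerCentralSeries n =
      Subgroup.map K.subtype ((⊤ : Subgroup K).lowerCentralSeries n) := by
  have hK : K ⊔ Subgroup.upperCentralSeries G (n + 0) = ⊤ := by
    refine eq_top_iff.mpr fun g _ => ?_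
    obtain ⟨k, hk, z, hz, rfl⟩ := hKZ g
    exact Subgroup.mul_mem_sup hk hz
  rw [Subgroup.top_subtype_lowerCentralSeries]
  refine le_antisymm ?_ (Subgroup.lowerCentralSeries_mono n le_top)
  simpa using Subgroup.lowerCentralSeries_le_sup_upperCentralSeries hK

/-- **Hekster's lemma, part 1.** If `G = K·ζ_n(G)` then
`γ_{n+1}(G) = γ_{n+1}(K)` (the latter viewed as a subgroup of `G`).
In Mathlib's indexing `γ_{n+1}` is `lowerCentralSeries · n`. -/
theorem hekster_lowerCentral (G : Type*) [Group G] (K : Subgroup G) (n : ℕ)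
    (hn : 0 < n)
    (hKZ : ∀ g : G, ∃ k ∈ K, ∃ z ∈ upperCentralSeries G n, g = k * z) :
    (⊤ : Subgroup G).lowerCentralSeries n =
      Subgroup.map K.subtype ((⊤ : Subgroup K).lowerCentralSeries n) :=
  hekster_lowerCentral_general G K n hKZ
end

section
/- Let G be a group, R a ring, and A an RG-module having a Z-decomposition A = ζ_{RG}^∞(A) ⊕ E for some RG-hypereccentric submodule E. Then E contains every RG-hypereccentric RG-submodule of A; in particular, the maximal RG-hypereccentric submodule is unique. -/
variable (R : Type*) [Ring R] (G : Type*) [Group G]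
variable (A : Type*) [AddCommGroup A] [Module (MonoidAlgebra R G) A]

/-- `SubModHypercenter R G A B` means that the `RG`-submodule `B` is contained
in some term of the upper `RG`-central series of `A`, whose successive
quotients are defined by `A_{α+1}/A_α = {a + A_α : a(g−1) ∈ A_α for all g}`,
with suprema at limit stages. -/
inductive SubModHypercenter : Submodule (MonoidAlgebra R G) A → Prop
  | bot : SubModHypercenter ⊥
  | step (B C : Submodule (MonoidAlgebra R G) A) : SubModHypercenter B →
      (∀ a ∈ C, ∀ g : G, MonoidAlgebra.of R G g • a - a ∈ B) →
      SubModHypercenter C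
  | sup (s : Set (Submodule (MonoidAlgebra R G) A)) :
      (∀ B ∈ s, SubModHypercenter B) → SubModHypercenter (sSup s)

/-- The upper `RG`-hypercenter `ζ_{RG}^∞(A)`: the last term of the upper
`RG`-central series of `A`. -/
noncomputable def modHypercenter : Submodule (MonoidAlgebra R G) A :=
  sSup {B : Submodule (MonoidAlgebra R G) A | SubModHypercenter R G A B}

/-- An `RG`-submodule `C` of `A` is `RG`-hypereccentric if it admits an
ascending (transfinite) series of `RG`-submodules starting at `0` whose
successive factors are simple `RG`-modules on which `G` acts nontrivially. -/
inductive IsHypereccentric : Submodule (MonoidAlgebra R G) A → Prop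
  | bot : IsHypereccentric ⊥
  | step (B C : Submodule (MonoidAlgebra R G) A) : IsHypereccentric B → B ≤ C →
      IsSimpleModule (MonoidAlgebra R G) (↥C ⧸ Submodule.comap C.subtype B) →
      (∃ g : G, ∃ a ∈ C, MonoidAlgebra.of R G g • a - a ∉ B) →
      IsHypereccentric C
  | sup (s : Set (Submodule (MonoidAlgebra R G) A)) :
      (∀ B ∈ s, IsHypereccentric B) → IsHypereccentric (sSup s)

/-!
Let `C/B` be a simple factor of `A` on which `G` acts nontrivially. Call `D` avoiding for it if
`C ≤ D ⊔ K` forces `C ≤ K` whenever `B ≤ K`. Every hypercentral submodule is avoiding: a central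
step `D` over `D'` can be traded for `D'`, because a commutator `a(g - 1) ∉ B` with `a ∈ C`
generates `C` over `B` and lies in `D' ⊔ K`; arbitrary joins reduce to finite ones because `C` is
compact over `B`. Applied to `C ≤ ζ(A) ⊔ E` with `B ≤ E`, this gives `C ≤ E` at every step of a
hypereccentric series.
-/

section Lattice

variable {α : Type*}

def AvoidsFactor [Lattice α] (B C D : α) : Prop :=
  ∀ K, B ≤ K → C ≤ D ⊔ K → C ≤ K

theorem CovBy.le_of_le_of_not_le [Lattice α] {B C X c : α} (h : B ⋖ C) (hBX : B ≤ X)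
    (hc : c ≤ C ⊓ X) (hcB : ¬c ≤ B) : C ≤ X := by
  rcases h.eq_or_eq (le_inf h.le hBX) inf_le_left with h' | h'
  · exact absurd (h' ▸ hc) hcB
  · exact inf_eq_left.1 h'

theorem AvoidsFactor.sup [Lattice α] {B C D₁ D₂ : α} (h₁ : AvoidsFactor B C D₁)
    (h₂ : AvoidsFactor B C D₂) : AvoidsFactor B C (D₁ ⊔ D₂) := fun K hK hC =>
  h₂ K hK (h₁ (D₂ ⊔ K) (le_sup_of_le_right hK) (sup_assoc D₁ D₂ K ▸ hC))

theorem avoidsFactor_bot [Lattice α] [OrderBot α] (B C : α) : AvoidsFactor B C ⊥ :=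
  fun K _ hC => bot_sup_eq K ▸ hC

theorem AvoidsFactor.finset_sup [Lattice α] [OrderBot α] {B C : α} {ι : Type*} {t : Finset ι}
    {f : ι → α} (h : ∀ i ∈ t, AvoidsFactor B C (f i)) : AvoidsFactor B C (t.sup f) :=
  Finset.sup_induction (avoidsFactor_bot B C) (fun _ h₁ _ h₂ => h₁.sup h₂) h

theorem avoidsFactor_sSup [CompleteLattice α] [IsCompactlyGenerated α] {B C : α} {s : Set α}
    (hBC : B ⋖ C) (h : ∀ D ∈ s, AvoidsFactor B C D) : AvoidsFactor B C (sSup s) := by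
  classical
  intro K hK hC
  obtain ⟨c, hc, hcC, hcB⟩ : ∃ c, IsCompactElement c ∧ c ≤ C ∧ ¬c ≤ B := by
    by_contra! hall
    exact hBC.lt.not_ge (le_iff_compact_le_imp.2 hall)
  obtain ⟨t, hts, hct⟩ := (CompleteLattice.isCompactElement_iff_exists_le_sSup_of_le_sSup _ c).1 hc (insert K s)
    (sSup_insert (a := K) ▸ sup_comm K (sSup s) ▸ hcC.trans hC)
  have hsplit : t.sup id ≤ (t.erase K).sup id ⊔ K := Finset.sup_le fun D hD => by
    by_cases hDK : D = K
    · exact hDK ▸ le_sup_right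
    · exact le_sup_of_le_left (Finset.le_sup (f := id) (Finset.mem_erase.2 ⟨hDK, hD⟩))
  have htD : AvoidsFactor B C ((t.erase K).sup id) := AvoidsFactor.finset_sup fun D hD =>
    h D (((Set.mem_insert_iff.1 (hts (Finset.mem_of_mem_erase hD))).resolve_left
      (Finset.ne_of_mem_erase hD)))
  exact htD K hK (hBC.le_of_le_of_not_le (le_sup_of_le_right hK)
    (le_inf hcC (hct.trans hsplit)) hcB)

end Lattice

section Module

variable {R G A}

theorem avoidsFactor_of_smul_sub_mem {B C D D' : Submodule (MonoidAlgebra R G) A} {g : G} {a : A}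
    (hBC : B ⋖ C) (ha : a ∈ C) (hg : MonoidAlgebra.of R G g • a - a ∉ B)
    (hD' : AvoidsFactor B C D') (hD : ∀ d ∈ D, ∀ g : G, MonoidAlgebra.of R G g • d - d ∈ D') :
    AvoidsFactor B C D := by
  intro K hK hC
  refine hD' K hK (hBC.le_of_le_of_not_le (le_sup_of_le_right hK) ?_
    (mt (Submodule.span_singleton_le_iff_mem _ _).1 hg))
  rw [Submodule.span_singleton_le_iff_mem, Submodule.mem_inf]
  refine ⟨C.sub_mem (C.smul_mem _ ha) ha, ?_⟩
  obtain ⟨d, hd, k, hk, rfl⟩ := Submodule.mem_sup.1 (hC ha)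
  have hsplit : MonoidAlgebra.of R G g • (d + k) - (d + k)
      = (MonoidAlgebra.of R G g • d - d) + (MonoidAlgebra.of R G g • k - k) := by
    rw [smul_add]; abel
  rw [hsplit]
  exact Submodule.add_mem_sup (hD d hd g) (K.sub_mem (K.smul_mem _ hk) hk)

theorem SubModHypercenter.avoidsFactor {B C D : Submodule (MonoidAlgebra R G) A} {g : G} {a : A}
    (hD : SubModHypercenter R G A D) (hBC : B ⋖ C) (ha : a ∈ C)
    (hg : MonoidAlgebra.of R G g • a - a ∉ B) : AvoidsFactor B C D := by
  induction hD with
  | bot => exact avoidsFactor_bot B C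
  | step D' D _ hcomm ih => exact avoidsFactor_of_smul_sub_mem hBC ha hg ih hcomm
  | sup s _ ih => exact avoidsFactor_sSup hBC ih

theorem subModHypercenter_modHypercenter : SubModHypercenter R G A (modHypercenter R G A) :=
  SubModHypercenter.sup _ fun _ hB => hB

theorem IsHypereccentric.le_of_codisjoint {C E : Submodule (MonoidAlgebra R G) A}
    (hdec : Codisjoint (modHypercenter R G A) E) (hC : IsHypereccentric R G A C) : C ≤ E := by
  induction hC with
  | bot => exact bot_le
  | sup s _ ih => exact sSup_le ih
  | step B C _ hBC hsimple hwit ih =>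
    obtain ⟨g, a, ha, hg⟩ := hwit
    exact (subModHypercenter_modHypercenter.avoidsFactor
      ((covBy_iff_quot_is_simple hBC).2 hsimple) ha hg) E ih (hdec.eq_top ▸ le_top)

end Module

/-- If an `RG`-module `A` has a Z-decomposition
`A = ζ_{RG}^∞(A) ⊕ E` with `E` an `RG`-hypereccentric submodule, then `E`
contains every `RG`-hypereccentric submodule of `A`; in particular the
maximal `RG`-hypereccentric submodule is unique. -/
theorem hypereccentric_le_of_zDecomposition
    (R : Type*) [Ring R] (G : Type*) [Group G]
    (A : Type*) [AddCommGroup A] [Module (MonoidAlgebra R G) A]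
    (E : Submodule (MonoidAlgebra R G) A)
    (hE : IsHypereccentric R G A E)
    (hdec : IsCompl (modHypercenter R G A) E) :
    (∀ C, IsHypereccentric R G A C → C ≤ E) ∧
      (∀ E' : Submodule (MonoidAlgebra R G) A,
        IsHypereccentric R G A E' → (∀ C, IsHypereccentric R G A C → C ≤ E') →
        E' = E) :=
  ⟨fun _ hC => hC.le_of_codisjoint hdec.codisjoint,
    fun _ hE' hmax => le_antisymm (hE'.le_of_codisjoint hdec.codisjoint) (hmax E hE)⟩
end

section
/- Let G be a finitely generated group whose hypercenter has finite index. Then the terminal ordinal length of the upper central series of G is finite, i.e. ζ_∞(G) = ζ_n(G) for some finite n. -/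
variable (G : Type*) [Group G]

/-- `SubHypercenter G H` means that `H` is contained in some term of the
transfinite upper central series of `G`:  `⊥ = ζ_0` qualifies, any subgroup
`K` with `[K,G] ≤ H` for a qualifying `H` qualifies (successor step), and a
supremum of qualifying subgroups qualifies (limit step). -/
inductive SubHypercenter : Subgroup G → Prop
  | bot : SubHypercenter ⊥
  | step (H K : Subgroup G) : SubHypercenter H →
      (∀ x ∈ K, ∀ y : G, x * y * x⁻¹ * y⁻¹ ∈ H) → SubHypercenter K
  | sup (s : Set (Subgroup G)) : (∀ H ∈ s, SubHypercenter H) →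
      SubHypercenter (sSup s)

/-- The upper hypercenter `ζ_∞(G)`: the last (stable) term of the transfinite
upper central series of `G`. -/
def hypercenter : Subgroup G := sSup {H : Subgroup G | SubHypercenter G H}

/-- A group is hypercentral if it coincides with its upper hypercenter. -/
def IsHypercentral : Prop := hypercenter G = ⊤

/-! In a finitely generated group the transfinite upper central series already stops at
`ζ_ω = ⋃ ζ_n`: if every commutator `⁅x, y⁆` lies in `ζ_ω`, then the commutators of `x` with the
finitely many generators lie in a common `ζ_n`, whence `x ∈ ζ_{n+1}`. By Schreier's lemma the
finite-index subgroup `ζ_∞` is finitely generated, so its generators, too, lie in a single `ζ_n`. -/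

open scoped commutatorElement

section

variable {G}

theorem Subgroup.FG.exists_le_of_le_iSup {ι : Type*} [Nonempty ι] {K : ι → Subgroup G}
    (hK : Directed (· ≤ ·) K) {H : Subgroup G} (hH : H.FG) (h : H ≤ ⨆ i, K i) :
    ∃ i, H ≤ K i := by
  obtain ⟨T, rfl⟩ := hH
  choose f hf using fun t : T =>
    (Subgroup.mem_iSup_of_directed hK).1 (h (Subgroup.subset_closure t.2))
  obtain ⟨i, hi⟩ := hK.finite_le f
  exact ⟨i, (Subgroup.closure_le _).2 fun t ht => hi ⟨t, ht⟩ (hf ⟨t, ht⟩)⟩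

theorem commutatorElement_mem_of_closure_eq_top {N : Subgroup G} [N.Normal] {S : Set G}
    (hS : Subgroup.closure S = ⊤) {x : G} (hx : ∀ s ∈ S, ⁅x, s⁆ ∈ N) (y : G) : ⁅x, y⁆ ∈ N := by
  -- `{y | ⁅x, y⁆ ∈ N}` is a subgroup: the preimage of the centralizer of `x` in `G ⧸ N`.
  have hcomm : ∀ y, ⁅x, y⁆ ∈ N ↔
      y ∈ (Subgroup.centralizer {(x : G ⧸ N)}).comap (QuotientGroup.mk' N) := by
    intro y
    rw [Subgroup.mem_comap, Subgroup.mem_centralizer_singleton_iff, QuotientGroup.mk'_apply,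
      ← QuotientGroup.mk_mul, ← QuotientGroup.mk_mul, eq_comm, QuotientGroup.eq_iff_div_mem,
      div_eq_mul_inv, mul_inv_rev, commutatorElement_def]
    simp only [mul_assoc]
  have hle : Subgroup.closure S ≤ _ := (Subgroup.closure_le _).2 fun s hs => (hcomm s).1 (hx s hs)
  exact (hcomm y).2 (hle (hS ▸ Subgroup.mem_top y))

variable (G) in
theorem Subgroup.upperCentralSeries_directed : Directed (· ≤ ·) (Subgroup.upperCentralSeries G) :=
  (Subgroup.upperCentralSeries_mono G).directed_le

variable (G) in
theorem Subgroup.upperCentralSeriesStep_iSup_upperCentralSeries_le [hG : Group.FG G] :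
    Subgroup.upperCentralSeriesStep (⨆ n, Subgroup.upperCentralSeries G n) ≤
      ⨆ n, Subgroup.upperCentralSeries G n := by
  obtain ⟨S, hS, hSfin⟩ := Group.fg_iff.1 hG
  intro x hx
  have hcomm : Subgroup.closure ((⁅x, ·⁆) '' S) ≤ ⨆ n, Subgroup.upperCentralSeries G n :=
    (Subgroup.closure_le _).2 <| Set.image_subset_iff.2 fun s _ => hx s
  obtain ⟨n, hn⟩ := (Subgroup.fg_iff _).2 ⟨_, rfl, hSfin.image _⟩ |>.exists_le_of_le_iSup
    (Subgroup.upperCentralSeries_directed G) hcomm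
  exact le_iSup (Subgroup.upperCentralSeries G) (n + 1) <|
    Subgroup.mem_upperCentralSeries_succ_iff.2 <| commutatorElement_mem_of_closure_eq_top hS
      fun s hs => hn (Subgroup.subset_closure ⟨s, hs, rfl⟩)

theorem SubHypercenter.le_iSup_upperCentralSeries [Group.FG G] {H : Subgroup G}
    (h : SubHypercenter G H) : H ≤ ⨆ n, Subgroup.upperCentralSeries G n := by
  induction h with
  | bot => exact bot_le
  | step H K _ hcomm ih =>
    exact fun x hx =>
      Subgroup.upperCentralSeriesStep_iSup_upperCentralSeries_le G fun y => ih (hcomm x hx y)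
  | sup s _ ih => exact sSup_le ih

theorem subHypercenter_upperCentralSeries (n : ℕ) :
    SubHypercenter G (Subgroup.upperCentralSeries G n) := by
  induction n with
  | zero => exact .bot
  | succ n ih => exact .step _ _ ih fun _ hx => Subgroup.mem_upperCentralSeries_succ_iff.1 hx

variable (G) in
theorem upperCentralSeries_le_hypercenter (n : ℕ) :
    Subgroup.upperCentralSeries G n ≤ hypercenter G :=
  le_sSup (subHypercenter_upperCentralSeries n)

variable (G) in
theorem hypercenter_le_iSup_upperCentralSeries [Group.FG G] :
    hypercenter G ≤ ⨆ n, Subgroup.upperCentralSeries G n :=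
  sSup_le fun _ h => h.le_iSup_upperCentralSeries

end

/-- If `G` is finitely generated and its upper hypercenter has finite index,
then the transfinite upper central series stabilizes at a finite stage:
`ζ_∞(G) = ζ_n(G)` for some `n`. -/
theorem hypercenter_eq_upperCentralSeries_of_fg (G : Type*) [Group G]
    (hfg : Group.FG G) (hfin : Finite (G ⧸ hypercenter G)) :
    ∃ n : ℕ, hypercenter G = upperCentralSeries G n := by
  have : (hypercenter G).FiniteIndex := Subgroup.finiteIndex_of_finite_quotient
  have hZ : (hypercenter G).FG :=
    (Group.fg_iff_subgroup_fg _).1 (Subgroup.fg_of_index_ne_zero _)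
  obtain ⟨n, hn⟩ := hZ.exists_le_of_le_iSup (Subgroup.upperCentralSeries_directed G)
    (hypercenter_le_iSup_upperCentralSeries G)
  exact ⟨n, le_antisymm hn (upperCentralSeries_le_hypercenter G n)⟩
end

section
/- Let G be a group with a finite normal subgroup L such that G/L is locally nilpotent, and suppose G has a normal subgroup Z contained in the hypercenter of G with G/Z finite. Then G/L is hypercentral. -/
variable (G : Type*) [Group G]

/-! The image `Z̄` of `Z` in `Q = G ⧸ L` lies in the hypercenter of `Q`, and `Q ⧸ Z̄` is a finite
quotient of the locally nilpotent group `Q`, hence nilpotent: it is already the image of the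
finitely generated subgroup spanned by lifts of its elements. Pulling the upper central series of
`Q ⧸ Z̄` back to `Q` continues the transfinite upper central series of `Q` beyond `Z̄`, and reaches
all of `Q` after finitely many further steps. -/

section

variable {G} {G' : Type*} [Group G']

theorem SubHypercenter.map (f : G →* G') (hf : Function.Surjective f) {H : Subgroup G}
    (h : SubHypercenter G H) : SubHypercenter G' (H.map f) := by
  induction h with
  | bot => rw [Subgroup.map_bot]; exact .bot
  | step H K _ hcomm ih =>
      refine .step _ (K.map f) ih ?_
      rintro _ ⟨x, hx, rfl⟩ y
      obtain ⟨y, rfl⟩ := hf y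
      exact ⟨x * y * x⁻¹ * y⁻¹, hcomm x hx y, by simp⟩
  | sup s _ ih =>
      rw [sSup_eq_iSup', Subgroup.map_iSup, ← sSup_range]
      exact .sup _ <| Set.forall_mem_range.2 fun H => ih H H.2

theorem subHypercenter_hypercenter : SubHypercenter G (hypercenter G) :=
  .sup _ fun _ h => h

instance hypercenter_normal : (hypercenter G).Normal where
  conj_mem x hx g := by
    have hconj : (hypercenter G).map (MulAut.conj g).toMonoidHom ≤ hypercenter G :=
      le_sSup (subHypercenter_hypercenter.map _ (MulAut.conj g).surjective)
    exact hconj ⟨x, hx, rfl⟩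

theorem subHypercenter_iff_le_hypercenter {H : Subgroup G} :
    SubHypercenter G H ↔ H ≤ hypercenter G := by
  refine ⟨fun h => le_sSup h, fun h => .step _ H subHypercenter_hypercenter fun x hx y => ?_⟩
  have hx' := h hx
  simpa only [mul_assoc] using mul_mem hx' (hypercenter_normal.conj_mem _ (inv_mem hx') y)

theorem SubHypercenter.comap_upperCentralSeries {N : Subgroup G} [N.Normal]
    (hN : SubHypercenter G N) (i : ℕ) :
    SubHypercenter G ((Subgroup.upperCentralSeries (G ⧸ N) i).comap (QuotientGroup.mk' N)) := by
  induction i with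
  | zero => rwa [Subgroup.upperCentralSeries_zero, MonoidHom.comap_bot, QuotientGroup.ker_mk']
  | succ i ih =>
      refine .step _ _ ih fun x hx y => ?_
      simpa [commutatorElement_def] using Subgroup.mem_upperCentralSeries_succ_iff.1 hx (y : G ⧸ N)

theorem isHypercentral_of_isNilpotent_quotient {N : Subgroup G} [N.Normal]
    (hN : SubHypercenter G N) [Group.IsNilpotent (G ⧸ N)] : IsHypercentral G := by
  obtain ⟨n, hn⟩ := Group.IsNilpotent.nilpotent (G ⧸ N)
  have htop := hN.comap_upperCentralSeries n
  rw [hn, Subgroup.comap_top] at htop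
  exact top_le_iff.1 (le_sSup htop)

theorem isNilpotent_of_locallyNilpotent_of_surjective
    (hloc : ∀ S : Subgroup G, S.FG → Group.IsNilpotent S) [Group.FG G'] (f : G →* G')
    (hf : Function.Surjective f) : Group.IsNilpotent G' := by
  obtain ⟨S, hS, hSfin⟩ := Group.fg_iff.1 ‹Group.FG G'›
  set F := Subgroup.closure (Function.surjInv hf '' S)
  have hFfg : F.FG := (Subgroup.fg_iff F).2 ⟨_, rfl, hSfin.image _⟩
  have hFf : Function.Surjective (f.comp F.subtype) := by
    rw [← MonoidHom.range_eq_top, MonoidHom.range_comp, Subgroup.range_subtype,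
      MonoidHom.map_closure, Set.image_image]
    simpa [Function.surjInv_eq hf] using hS
  have := hloc F hFfg
  exact Group.nilpotent_of_surjective _ hFf

end

theorem quotient_hypercentral_general (G : Type*) [Group G]
    (L : Subgroup G) (hLn : L.Normal)
    (hloc : ∀ S : Subgroup (G ⧸ L), S.FG → Group.IsNilpotent S)
    (Z : Subgroup G) (hZn : Z.Normal) (hZ : Z ≤ hypercenter G)
    (hfin : Finite (G ⧸ Z)) :
    IsHypercentral (G ⧸ L) := by
  set Zb := Z.map (QuotientGroup.mk' L)
  have hZb : SubHypercenter (G ⧸ L) Zb :=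
    (subHypercenter_iff_le_hypercenter.2 hZ).map _ (QuotientGroup.mk'_surjective L)
  have : Zb.Normal := hZn.map _ (QuotientGroup.mk'_surjective L)
  have : Finite ((G ⧸ L) ⧸ Zb) :=
    .of_surjective _ <| QuotientGroup.map_surjective_of_surjective (N := Z) Zb _
      ((QuotientGroup.mk'_surjective Zb).comp (QuotientGroup.mk'_surjective L))
      (Subgroup.le_comap_map _ _)
  have : Group.IsNilpotent ((G ⧸ L) ⧸ Zb) :=
    isNilpotent_of_locallyNilpotent_of_surjective hloc _ (QuotientGroup.mk'_surjective Zb)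
  exact isHypercentral_of_isNilpotent_quotient hZb

/-- Final step of the proof of Theorem B.  If `L` is a finite normal subgroup
of `G` with `G/L` locally nilpotent, and `G` has a normal subgroup `Z`
contained in its hypercenter with `G/Z` finite, then `G/L` is hypercentral. -/
theorem quotient_hypercentral (G : Type*) [Group G]
    (L : Subgroup G) (hLn : L.Normal) [Finite L]
    (hloc : ∀ S : Subgroup (G ⧸ L), S.FG → Group.IsNilpotent S)
    (Z : Subgroup G) (hZn : Z.Normal) (hZ : Z ≤ hypercenter G)
    (hfin : Finite (G ⧸ Z)) :
    IsHypercentral (G ⧸ L) :=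
  quotient_hypercentral_general G L hLn hloc Z hZn hZ hfin
end

section
/- Every finitely generated FC-hypercentral group is nilpotent-by-finite. -/
variable (G : Type*) [Group G]

/-- `SubFCHypercenter G H` means that `H` is contained in some term of the
transfinite upper FC-central series of `G`: `⊥` qualifies; if `H` qualifies
and every element of `K` has finitely many conjugates modulo `H` (i.e. its
conjugacy class has finite image in the coset space `G/H`), then `K`
qualifies; and a supremum of qualifying subgroups qualifies. -/
inductive SubFCHypercenter : Subgroup G → Prop
  | bot : SubFCHypercenter ⊥
  | step (H K : Subgroup G) : SubFCHypercenter H →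
      (∀ x ∈ K,
        Set.Finite ((QuotientGroup.mk : G → G ⧸ H) ''
          {z : G | ∃ g : G, z = g * x * g⁻¹})) →
      SubFCHypercenter K
  | sup (s : Set (Subgroup G)) : (∀ H ∈ s, SubFCHypercenter H) →
      SubFCHypercenter (sSup s)

/-- A group is FC-hypercentral if it coincides with the last term of its
upper FC-central series. -/
def IsFCHypercentral : Prop :=
  sSup {H : Subgroup G | SubFCHypercenter G H} = ⊤

variable {G}

open scoped commutatorElement

/-!
Call a subgroup `M` virtually hypercentral if `[M, D, …, D] = 1` for some finite-index normal
subgroup `D`. For normal subgroups this is closed under joins, so the elements whose normal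
closure is virtually hypercentral form a normal subgroup `V`. The key point is that `V` absorbs
every `x` with finitely many conjugates modulo `V`: the centralizer of `xV` in `G/V` then has
finite index, so it contains the image of a finite-index normal subgroup `W`, generated by a
finite set `B` because `G` is finitely generated. The commutators `[x, b]`, `b ∈ B`, lie in `V`,
and `[⟨x⟩ᴳ, W]` lies in their normal closure, which is virtually hypercentral; hence so is `⟨x⟩ᴳ`.
By induction every term of the upper FC-central series lies in `V`, so `V = G`. As `G` is the
normal closure of finitely many generators, `[G, D, …, D] = 1` for some finite-index normal `D`,
which is therefore nilpotent.
-/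

namespace Subgroup

def iterCommutator (M D : Subgroup G) : ℕ → Subgroup G
  | 0 => M
  | n + 1 => ⁅iterCommutator M D n, D⁆

instance iterCommutator_normal (M D : Subgroup G) [M.Normal] [D.Normal] (n : ℕ) :
    (iterCommutator M D n).Normal := by
  induction n with
  | zero => assumption
  | succ n _ => rw [iterCommutator]; infer_instance

lemma iterCommutator_mono {M M' D D' : Subgroup G} (hM : M ≤ M') (hD : D ≤ D') (n : ℕ) :
    iterCommutator M D n ≤ iterCommutator M' D' n := by
  induction n with
  | zero => exact hM
  | succ n ih => exact commutator_mono ih hD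

lemma iterCommutator_succ' (M D : Subgroup G) (n : ℕ) :
    iterCommutator M D (n + 1) = iterCommutator ⁅M, D⁆ D n := by
  induction n with
  | zero => rfl
  | succ n ih => rw [iterCommutator, ih, iterCommutator]

lemma iterCommutator_eq_bot_of_le {M D : Subgroup G} {m n : ℕ}
    (h : iterCommutator M D m = ⊥) (hmn : m ≤ n) : iterCommutator M D n = ⊥ := by
  induction n, hmn using Nat.le_induction with
  | base => exact h
  | succ n _ ih => rw [iterCommutator, ih, commutator_bot_left]

lemma commutator_sup_le (A B D : Subgroup G) [A.Normal] [B.Normal] [D.Normal] :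
    ⁅A ⊔ B, D⁆ ≤ ⁅A, D⁆ ⊔ ⁅B, D⁆ := by
  let π := QuotientGroup.mk' (⁅A, D⁆ ⊔ ⁅B, D⁆)
  have hcomm : ∀ C : Subgroup G, ⁅C, D⁆ ≤ ⁅A, D⁆ ⊔ ⁅B, D⁆ → map π C ≤ centralizer (map π D) := by
    intro C hC
    rwa [← commutator_eq_bot_iff_le_centralizer, ← map_commutator, map_eq_bot_iff,
      QuotientGroup.ker_mk']
  rw [← QuotientGroup.ker_mk' (⁅A, D⁆ ⊔ ⁅B, D⁆), ← map_eq_bot_iff, map_commutator, map_sup,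
    commutator_eq_bot_iff_le_centralizer]
  exact sup_le (hcomm A le_sup_left) (hcomm B le_sup_right)

lemma iterCommutator_sup_le (A B D : Subgroup G) [A.Normal] [B.Normal] [D.Normal] (n : ℕ) :
    iterCommutator (A ⊔ B) D n ≤ iterCommutator A D n ⊔ iterCommutator B D n := by
  induction n with
  | zero => exact le_rfl
  | succ n ih => exact (commutator_mono ih le_rfl).trans (commutator_sup_le _ _ D)

lemma lowerCentralSeries_le_iterCommutator (D : Subgroup G) (n : ℕ) :
    D.lowerCentralSeries n ≤ iterCommutator ⊤ D n := by
  induction n with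
  | zero => exact le_top
  | succ n ih => exact commutator_mono ih le_rfl

def IsVirtuallyHypercentral (M : Subgroup G) : Prop :=
  ∃ D : Subgroup G, D.Normal ∧ D.FiniteIndex ∧ ∃ n, iterCommutator M D n = ⊥

namespace IsVirtuallyHypercentral

lemma bot : IsVirtuallyHypercentral (⊥ : Subgroup G) :=
  ⟨⊤, inferInstance, inferInstance, 0, rfl⟩

lemma mono {M M' : Subgroup G} (h : IsVirtuallyHypercentral M) (hle : M' ≤ M) :
    IsVirtuallyHypercentral M' := by
  obtain ⟨D, hD, hDfi, n, hn⟩ := h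
  exact ⟨D, hD, hDfi, n, le_bot_iff.mp (hn ▸ iterCommutator_mono hle le_rfl n)⟩

lemma sup {M M' : Subgroup G} [M.Normal] [M'.Normal] (h : IsVirtuallyHypercentral M)
    (h' : IsVirtuallyHypercentral M') : IsVirtuallyHypercentral (M ⊔ M') := by
  obtain ⟨D, hD, hDfi, n, hn⟩ := h
  obtain ⟨D', hD', hD'fi, n', hn'⟩ := h'
  refine ⟨D ⊓ D', inferInstance, inferInstance, max n n', le_bot_iff.mp ?_⟩
  calc iterCommutator (M ⊔ M') (D ⊓ D') (max n n')
      ≤ iterCommutator M (D ⊓ D') (max n n') ⊔ iterCommutator M' (D ⊓ D') (max n n') :=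
        iterCommutator_sup_le _ _ _ _
    _ ≤ iterCommutator M D (max n n') ⊔ iterCommutator M' D' (max n n') :=
        sup_le_sup (iterCommutator_mono le_rfl inf_le_left _)
          (iterCommutator_mono le_rfl inf_le_right _)
    _ = ⊥ := by
        rw [iterCommutator_eq_bot_of_le hn (le_max_left n n'),
          iterCommutator_eq_bot_of_le hn' (le_max_right n n'), sup_bot_eq]

lemma of_commutator_le {M M' W : Subgroup G} [W.Normal] [W.FiniteIndex]
    (h : IsVirtuallyHypercentral M') (hMW : ⁅M, W⁆ ≤ M') : IsVirtuallyHypercentral M := by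
  obtain ⟨D, hD, hDfi, n, hn⟩ := h
  refine ⟨W ⊓ D, inferInstance, inferInstance, n + 1, le_bot_iff.mp ?_⟩
  rw [iterCommutator_succ', ← hn]
  exact iterCommutator_mono ((commutator_mono le_rfl inf_le_left).trans hMW) inf_le_right n

lemma exists_nilpotent_of_top (h : IsVirtuallyHypercentral (⊤ : Subgroup G)) :
    ∃ D : Subgroup G, D.Normal ∧ Group.IsNilpotent D ∧ D.FiniteIndex := by
  obtain ⟨D, hD, hDfi, n, hn⟩ := h
  exact ⟨D, hD, isNilpotent_of_lowerCentralSeries_eq_bot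
    (le_bot_iff.mp (hn ▸ lowerCentralSeries_le_iterCommutator D n)), hDfi⟩

end IsVirtuallyHypercentral

end Subgroup

lemma MonoidHom.image_conjugatesOf {Q : Type*} [Group Q] {f : G →* Q}
    (hf : Function.Surjective f) (x : G) : f '' conjugatesOf x = conjugatesOf (f x) := by
  ext y
  simp only [conjugatesOf, Set.mem_image, Set.mem_ofPred_eq, isConj_iff]
  constructor
  · rintro ⟨_, ⟨c, rfl⟩, rfl⟩
    exact ⟨f c, by simp⟩
  · rintro ⟨c, rfl⟩
    obtain ⟨g, rfl⟩ := hf c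
    exact ⟨g * x * g⁻¹, ⟨g, rfl⟩, by simp⟩

lemma Subgroup.finiteIndex_centralizer_of_finite_conjugatesOf {Q : Type*} [Group Q] {q : Q}
    (h : (conjugatesOf q).Finite) : (Subgroup.centralizer {q}).FiniteIndex := by
  have horbit : MulAction.orbit (ConjAct Q) q = conjugatesOf q := by
    ext
    exact ConjAct.mem_orbit_conjAct.trans isConj_comm
  rw [Subgroup.centralizer_eq_comap_stabilizer]
  refine ⟨(Subgroup.index_comap_of_surjective _ ConjAct.toConjAct.surjective).trans_ne ?_⟩
  rw [MulAction.index_stabilizer, horbit]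
  exact ((Set.ncard_pos h).mpr ⟨q, mem_conjugatesOf_self⟩).ne'

namespace Subgroup

def finiteConjugatesModulo (H : Subgroup G) : Set G :=
  {x | ((↑) '' conjugatesOf x : Set (G ⧸ H)).Finite}

lemma finiteConjugatesModulo_mono {H K : Subgroup G} (h : H ≤ K) :
    finiteConjugatesModulo H ⊆ finiteConjugatesModulo K := by
  intro x hx
  have himage : ((↑) '' conjugatesOf x : Set (G ⧸ K)) =
      quotientMapOfLE h '' ((↑) '' conjugatesOf x) := by
    rw [Set.image_image]
    rfl
  show Set.Finite _
  rw [himage]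
  exact hx.image _

lemma finite_conjugatesOf_of_mem_finiteConjugatesModulo {N : Subgroup G} [N.Normal] {x : G}
    (hx : x ∈ finiteConjugatesModulo N) : (conjugatesOf (x : G ⧸ N)).Finite :=
  MonoidHom.image_conjugatesOf (QuotientGroup.mk'_surjective N) x ▸ hx

lemma commutator_normalClosure_singleton_le (x : G) (B : Set G) [(closure B).Normal] :
    ⁅normalClosure {x}, closure B⁆ ≤ normalClosure ((fun b => ⁅x, b⁆) '' B) := by
  let π := QuotientGroup.mk' (normalClosure ((fun b => ⁅x, b⁆) '' B))
  have hπ : Function.Surjective π := QuotientGroup.mk'_surjective _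
  have hx : π x ∈ centralizer (map π (closure B)) := by
    rw [MonoidHom.map_closure, centralizer_closure, mem_centralizer_iff]
    rintro _ ⟨b, hb, rfl⟩
    have hxb : π ⁅x, b⁆ = 1 :=
      (QuotientGroup.eq_one_iff _).mpr (subset_normalClosure ⟨b, hb, rfl⟩)
    rw [map_commutatorElement, commutatorElement_eq_one_iff_mul_comm] at hxb
    exact hxb.symm
  have : (map π (closure B)).Normal := Normal.map ‹_› π hπ
  rw [← QuotientGroup.ker_mk' (normalClosure ((fun b => ⁅x, b⁆) '' B)), ← map_eq_bot_iff,
    map_commutator, commutator_eq_bot_iff_le_centralizer, map_normalClosure _ _ hπ,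
    Set.image_singleton]
  exact normalClosure_le_normal (Set.singleton_subset_iff.mpr hx)

variable (G) in
def virtualHypercenter : Subgroup G where
  carrier := {x | IsVirtuallyHypercentral (normalClosure {x})}
  one_mem' := IsVirtuallyHypercentral.bot.mono
    (normalClosure_le_normal (Set.singleton_subset_iff.mpr (one_mem ⊥)))
  mul_mem' hx hy := (hx.sup hy).mono <| normalClosure_le_normal <|
    Set.singleton_subset_iff.mpr <|
      mul_mem (mem_sup_left (subset_normalClosure rfl)) (mem_sup_right (subset_normalClosure rfl))
  inv_mem' hx := hx.mono <| normalClosure_le_normal <|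
    Set.singleton_subset_iff.mpr (inv_mem (subset_normalClosure rfl))

instance virtualHypercenter_normal : (virtualHypercenter G).Normal where
  conj_mem x hx g := hx.mono (normalClosure_le_normal (Set.singleton_subset_iff.mpr
    (normalClosure_normal.conj_mem x (subset_normalClosure (Set.mem_singleton _)) g)))

lemma isVirtuallyHypercentral_normalClosure {X : Set G} (hX : X.Finite)
    (hXV : X ⊆ virtualHypercenter G) : IsVirtuallyHypercentral (normalClosure X) := by
  induction X, hX using Set.Finite.induction_on with
  | empty => rw [normalClosure_empty]; exact IsVirtuallyHypercentral.bot
  | @insert x X _ _ ih =>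
    rw [Set.insert_eq, normalClosure_union]
    exact IsVirtuallyHypercentral.sup (hXV (Set.mem_insert x X))
      (ih ((Set.subset_insert x X).trans hXV))

lemma finiteConjugatesModulo_virtualHypercenter_subset [Group.FG G] :
    finiteConjugatesModulo (virtualHypercenter G) ⊆ virtualHypercenter G := by
  intro x hx
  let π := QuotientGroup.mk' (virtualHypercenter G)
  have hC := finiteIndex_centralizer_of_finite_conjugatesOf
    (finite_conjugatesOf_of_mem_finiteConjugatesModulo hx)
  have : (comap π (centralizer {π x})).FiniteIndex :=
    ⟨(index_comap_of_surjective _ (QuotientGroup.mk'_surjective _)).trans_ne hC.index_ne_zero⟩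
  let W := (comap π (centralizer {π x})).normalCore
  obtain ⟨B, hBW, hBfin⟩ := (fg_iff W).mp ((Group.fg_iff_subgroup_fg W).mp inferInstance)
  have hcomm : (fun b => ⁅x, b⁆) '' B ⊆ virtualHypercenter G := by
    rintro _ ⟨b, hb, rfl⟩
    have hb' : π b ∈ centralizer {π x} :=
      mem_comap.mp (normalCore_le _ (hBW ▸ subset_closure hb : b ∈ W))
    rw [mem_centralizer_singleton_iff] at hb'
    show ⁅x, b⁆ ∈ virtualHypercenter G
    rw [← QuotientGroup.eq_one_iff, ← QuotientGroup.mk'_apply, map_commutatorElement,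
      commutatorElement_eq_one_iff_mul_comm]
    exact hb'.symm
  have : (closure B).Normal := hBW ▸ inferInstance
  exact (isVirtuallyHypercentral_normalClosure (hBfin.image _) hcomm).of_commutator_le
    (hBW ▸ commutator_normalClosure_singleton_le x B)

end Subgroup

lemma SubFCHypercenter.le_virtualHypercenter [Group.FG G]
    {H : Subgroup G} (h : SubFCHypercenter G H) : H ≤ Subgroup.virtualHypercenter G := by
  induction h with
  | bot => exact bot_le
  | step H K _ hK ih =>
    intro x hx
    have hconj : {z : G | ∃ g : G, z = g * x * g⁻¹} = conjugatesOf x := by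
      ext z
      simp only [conjugatesOf, isConj_iff, Set.mem_ofPred_eq, eq_comm]
    exact Subgroup.finiteConjugatesModulo_virtualHypercenter_subset
      (Subgroup.finiteConjugatesModulo_mono ih (show Set.Finite _ from hconj ▸ hK x hx))
  | sup s _ ih => exact sSup_le ih

/-- Every finitely generated FC-hypercentral group is nilpotent-by-finite. -/
theorem nilpotent_by_finite_of_fg_FCHypercentral (G : Type*) [Group G]
    (hfg : Group.FG G) (hFC : IsFCHypercentral G) :
    ∃ N : Subgroup G, N.Normal ∧ Group.IsNilpotent N ∧ N.FiniteIndex := by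
  have hV : Subgroup.virtualHypercenter G = ⊤ :=
    top_le_iff.mp (hFC ▸ sSup_le fun _ hH => hH.le_virtualHypercenter)
  obtain ⟨S, hS, hSfin⟩ := Group.fg_iff.mp hfg
  have hSG : Subgroup.normalClosure S = ⊤ :=
    top_le_iff.mp (hS ▸ Subgroup.closure_le_normalClosure)
  have hVH := Subgroup.isVirtuallyHypercentral_normalClosure hSfin (hV ▸ Set.subset_univ S)
  exact (hSG ▸ hVH).exists_nilpotent_of_top
end
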